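/- For every n ∈ ℕ and every real polynomial P of degree ≤ n with nonnegative coefficients there exists a real polynomial P' of degree ≤ n with nonnegative coefficients such that: for all α > 0, all integers θ_i ≥ 1 and θ_j ≥ 1, all k ∈ ℝ⁴, all M > 0, all r ≥ M, and all reals Λ, Λ₀ with 0 ≤ Λ ≤ Λ₀, one has ∫_Λ^{Λ₀} ∫_Λ^{Λ₀} λ_i^{−θ_i−1} e^{−‖k‖²/(α λ_i²)} · λ_j^{−θ_j−1} e^{−‖k‖²/(α λ_j²)} · P( log₊ max( r/min(λ_i,λ_j), max(λ_i,λ_j)/M ) ) dλ_i dλ_j ≤ ∫_Λ^{Λ₀} λ^{−θ_i−θ_j−1} e^{−‖k‖²/(α λ²)} · P'( log₊ max( r/λ, λ/M ) ) dλ. -/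

import Mathlib

/-!
Split the square `(Λ, Λ₀)²` along its diagonal. On the half `λᵢ ≤ λⱼ`, bound the weight of the
larger scale `λⱼ` by `1` and integrate `λⱼ` over all of `[λᵢ, ∞)`. Since
`log₊ max (r/λᵢ, λⱼ/M) ≤ log₊ max (r/λᵢ, λᵢ/M) + log₊ (λⱼ/λᵢ)`, `P x ≤ P(1) (x + 1)ⁿ` and
`(log₊ z + 1)ⁿ ≤ (1 + 2n)ⁿ √z`, the `λⱼ`-integral is at most
`P(1) (1 + 2n)ⁿ (log₊ max (r/λᵢ, λᵢ/M) + 1)ⁿ ∫_{λᵢ}^∞ λⱼ^(-θⱼ-1) √(λⱼ/λᵢ) dλⱼ`, and the last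
integral is at most `2 λᵢ^(-θⱼ)`. With the factor in `λᵢ` this is half the single-scale integrand
for `P' = 4 P(1) (1 + 2n)ⁿ (X + 1)ⁿ`; the half `λⱼ < λᵢ` gives the other half.

Passing from the Lebesgue to the Bochner integrals needs the right-hand side to be integrable. It
is not only when `Λ = 0` and `k = 0`; then every inner integral on the left diverges like
`∫₀ dλ/λ`, so both sides are `0` by the convention for non-integrable functions.
-/

open MeasureTheory Real

noncomputable def logPlus (x : ℝ) : ℝ := Real.log (max 1 x)

open Set Polynomial
open scoped ENNReal

lemma logPlus_nonneg (x : ℝ) : 0 ≤ logPlus x :=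
  log_nonneg (le_max_left 1 x)

lemma logPlus_le_logPlus {x y : ℝ} (h : x ≤ y) : logPlus x ≤ logPlus y :=
  log_le_log (by positivity) (max_le_max le_rfl h)

lemma logPlus_of_one_le {x : ℝ} (hx : 1 ≤ x) : logPlus x = log x := by
  rw [logPlus, max_eq_right hx]

lemma logPlus_mul_le {x y : ℝ} (hy : 0 ≤ y) :
    logPlus (x * y) ≤ logPlus x + logPlus y := by
  have hmul : max 1 (x * y) ≤ max 1 x * max 1 y :=
    max_le (one_le_mul_of_one_le_of_one_le (le_max_left _ _) (le_max_left _ _))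
      (mul_le_mul (le_max_right _ _) (le_max_right _ _) hy (by positivity))
  rw [logPlus, logPlus, logPlus, ← log_mul (by positivity) (by positivity)]
  exact log_le_log (lt_max_of_lt_left one_pos) hmul

@[fun_prop]
lemma measurable_logPlus : Measurable logPlus :=
  measurable_log.comp (measurable_const.max measurable_id)

lemma one_le_logPlus {x : ℝ} (hx : exp 1 ≤ x) : 1 ≤ logPlus x := by
  rw [logPlus_of_one_le (one_le_exp zero_le_one |>.trans hx)]
  exact (le_log_iff_exp_le ((exp_pos 1).trans_le hx)).mpr hx

lemma logPlus_add_one_pow_le_sqrt (n : ℕ) {z : ℝ} (hz : 1 ≤ z) :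
    (logPlus z + 1) ^ n ≤ (1 + 2 * n) ^ n * √z := by
  rcases Nat.eq_zero_or_pos n with rfl | hn
  · simpa using one_le_sqrt.mpr hz
  have hn' : (0 : ℝ) < n := by exact_mod_cast hn
  set y := z ^ (2 * n : ℝ)⁻¹
  have hy : 1 ≤ y := one_le_rpow hz (by positivity)
  have hlog : log z ≤ 2 * n * y := by
    have := log_le_rpow_div (x := z) (by linarith) (inv_pos.mpr (by positivity : (0 : ℝ) < 2 * n))
    rwa [div_inv_eq_mul, mul_comm] at this
  have hyn : y ^ n = √z := by
    rw [← rpow_natCast, ← rpow_mul (by linarith), sqrt_eq_rpow]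
    congr 1
    field_simp
  calc (logPlus z + 1) ^ n ≤ ((1 + 2 * n) * y) ^ n := by
        rw [logPlus_of_one_le hz]
        exact pow_le_pow_left₀ (by linarith [log_nonneg hz]) (by nlinarith) n
    _ = (1 + 2 * n) ^ n * √z := by rw [mul_pow, hyn]

lemma logPlus_add_one_le (x : ℝ) : logPlus x + 1 ≤ max 1 x := by
  have := log_le_sub_one_of_pos (lt_max_of_lt_left one_pos : (0 : ℝ) < max 1 x)
  rw [logPlus]
  linarith

namespace Polynomial

variable {P : ℝ[X]}

lemma eval_nonneg_of_coeff_nonneg (hP : ∀ i, 0 ≤ P.coeff i) {x : ℝ} (hx : 0 ≤ x) :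
    0 ≤ P.eval x := by
  rw [eval_eq_sum_range]
  exact Finset.sum_nonneg fun i _ => mul_nonneg (hP i) (pow_nonneg hx i)

lemma eval_le_eval_one_mul_add_one_pow (hP : ∀ i, 0 ≤ P.coeff i) {n : ℕ} (hn : P.natDegree ≤ n)
    {x : ℝ} (hx : 0 ≤ x) :
    P.eval x ≤ P.eval 1 * (x + 1) ^ n := by
  rw [eval_eq_sum_range' (Nat.lt_succ_of_le hn), eval_eq_sum_range' (Nat.lt_succ_of_le hn),
    Finset.sum_mul]
  refine Finset.sum_le_sum fun i hi => ?_
  rw [one_pow, mul_one]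
  refine mul_le_mul_of_nonneg_left ?_ (hP i)
  calc x ^ i ≤ (x + 1) ^ i := pow_le_pow_left₀ hx (by linarith) i
    _ ≤ (x + 1) ^ n :=
        pow_le_pow_right₀ (by linarith) (Nat.lt_succ_iff.mp (Finset.mem_range.mp hi))

lemma leadingCoeff_le_eval (hP : ∀ i, 0 ≤ P.coeff i) {x : ℝ} (hx : 1 ≤ x) :
    P.leadingCoeff ≤ P.eval x := by
  rw [eval_eq_sum_range]
  calc P.leadingCoeff ≤ P.coeff P.natDegree * x ^ P.natDegree :=
        le_mul_of_one_le_right (hP _) (one_le_pow₀ hx)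
    _ ≤ _ := Finset.single_le_sum (f := fun i => P.coeff i * x ^ i)
        (fun i _ => mul_nonneg (hP i) (pow_nonneg (by linarith) i)) (Finset.self_mem_range_succ _)

lemma leadingCoeff_pos_of_coeff_nonneg (hP : ∀ i, 0 ≤ P.coeff i) (hP0 : P ≠ 0) :
    0 < P.leadingCoeff :=
  (hP _).lt_of_ne (leadingCoeff_ne_zero.mpr hP0).symm

end Polynomial

lemma lintegral_Ici_inv_pow_mul_sqrt_le {s : ℝ} (hs : 0 < s) {θ : ℕ} (hθ : 1 ≤ θ) :
    ∫⁻ t in Ici s, ENNReal.ofReal (1 / t ^ (θ + 1) * √(t / s)) ≤ ENNReal.ofReal (2 / s ^ θ) := by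
  have hθ' : (1 : ℝ) ≤ θ := by exact_mod_cast hθ
  have ha : -(θ : ℝ) - 2⁻¹ < -1 := by linarith
  have hrpow : ∀ t ∈ Ioi s,
      1 / t ^ (θ + 1) * √(t / s) = s ^ (-2⁻¹ : ℝ) * t ^ (-(θ : ℝ) - 2⁻¹) := by
    intro t ht
    have ht0 : 0 < t := hs.trans ht
    rw [sqrt_eq_rpow, div_rpow ht0.le hs.le, rpow_neg hs.le, one_div, ← rpow_natCast,
      ← rpow_neg ht0.le, show -(θ : ℝ) - 2⁻¹ = -((θ + 1 : ℕ) : ℝ) + 2⁻¹ by push_cast; ring,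
      rpow_add ht0, one_div]
    ring
  have hint : IntegrableOn (fun t => s ^ (-2⁻¹ : ℝ) * t ^ (-(θ : ℝ) - 2⁻¹)) (Ioi s) :=
    (integrableOn_Ioi_rpow_of_lt ha hs).const_mul _
  rw [← setLIntegral_congr Ioi_ae_eq_Ici, setLIntegral_congr_fun measurableSet_Ioi
    (fun t ht => by rw [hrpow t ht]), ← ofReal_integral_eq_lintegral_ofReal hint
    (ae_restrict_of_forall_mem measurableSet_Ioi fun t ht =>
      mul_nonneg (rpow_nonneg hs.le _) (rpow_nonneg (hs.trans ht).le _))]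
  refine ENNReal.ofReal_le_ofReal ?_
  rw [integral_const_mul, integral_Ioi_rpow_of_lt ha hs, ← mul_div_assoc, mul_neg,
    ← rpow_add hs, show -2⁻¹ + (-(θ : ℝ) - 2⁻¹ + 1) = -θ by ring, rpow_neg hs.le, rpow_natCast,
    neg_div, ← div_neg, show -(-(θ : ℝ) - 2⁻¹ + 1) = θ - 2⁻¹ by ring, ← one_div]
  rw [div_le_div_iff₀ (by linarith) (by positivity), one_div_mul_cancel (by positivity)]
  linarith

lemma logPlus_max_div_le {A M s t : ℝ} (hA : 0 ≤ A) (hs : 0 < s) (hst : s ≤ t) :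
    logPlus (max A (t / M)) ≤ logPlus (max A (s / M)) + logPlus (t / s) := by
  have hts : 1 ≤ t / s := (one_le_div hs).mpr hst
  have hsplit : max A (t / M) ≤ max A (s / M) * (t / s) := by
    refine max_le ((le_mul_of_one_le_right hA hts).trans ?_) ?_
    · exact mul_le_mul_of_nonneg_right (le_max_left _ _) (by positivity)
    · calc t / M = s / M * (t / s) := by
            rw [div_mul_div_comm, mul_comm s t, mul_div_mul_right _ _ hs.ne']
        _ ≤ max A (s / M) * (t / s) := mul_le_mul_of_nonneg_right (le_max_right _ _) (by positivity)
  exact (logPlus_le_logPlus hsplit).trans (logPlus_mul_le (by positivity))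

section TailBound

variable {P : ℝ[X]} {n : ℕ}

lemma eval_logPlus_max_div_le (hP : ∀ i, 0 ≤ P.coeff i) (hn : P.natDegree ≤ n) {A M s t : ℝ}
    (hA : 0 ≤ A) (hs : 0 < s) (hst : s ≤ t) :
    P.eval (logPlus (max A (t / M)))
      ≤ P.eval 1 * (1 + 2 * n) ^ n * (logPlus (max A (s / M)) + 1) ^ n * √(t / s) := by
  set x := logPlus (max A (t / M))
  set a := logPlus (max A (s / M))
  set b := logPlus (t / s)
  have hx0 : 0 ≤ x := logPlus_nonneg _
  have ha : 0 ≤ a := logPlus_nonneg _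
  have hb : 0 ≤ b := logPlus_nonneg _
  have hP1 : 0 ≤ P.eval 1 := eval_nonneg_of_coeff_nonneg hP zero_le_one
  have hx : x + 1 ≤ (a + 1) * (b + 1) := by
    nlinarith [logPlus_max_div_le (M := M) hA hs hst]
  calc P.eval x
      ≤ P.eval 1 * ((a + 1) * (b + 1)) ^ n :=
        (eval_le_eval_one_mul_add_one_pow hP hn hx0).trans
          (mul_le_mul_of_nonneg_left (pow_le_pow_left₀ (by linarith) hx n) hP1)
    _ = P.eval 1 * (a + 1) ^ n * (b + 1) ^ n := by rw [mul_pow, mul_assoc]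
    _ ≤ P.eval 1 * (a + 1) ^ n * ((1 + 2 * n) ^ n * √(t / s)) :=
        mul_le_mul_of_nonneg_left (logPlus_add_one_pow_le_sqrt n ((one_le_div hs).mpr hst))
          (by positivity)
    _ = _ := by ring

lemma lintegral_Ici_inv_pow_mul_eval_logPlus_le (hP : ∀ i, 0 ≤ P.coeff i) (hn : P.natDegree ≤ n)
    {A M s : ℝ} (hA : 0 ≤ A) (hs : 0 < s) {θ : ℕ} (hθ : 1 ≤ θ) :
    ∫⁻ t in Ici s, ENNReal.ofReal (1 / t ^ (θ + 1) * P.eval (logPlus (max A (t / M))))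
      ≤ ENNReal.ofReal
          (2 * (P.eval 1 * (1 + 2 * n) ^ n) * (logPlus (max A (s / M)) + 1) ^ n / s ^ θ) := by
  set K := P.eval 1 * (1 + 2 * n) ^ n * (logPlus (max A (s / M)) + 1) ^ n
  have hK : 0 ≤ K := by
    have := eval_nonneg_of_coeff_nonneg hP zero_le_one
    have := logPlus_nonneg (max A (s / M))
    positivity
  calc ∫⁻ t in Ici s, ENNReal.ofReal (1 / t ^ (θ + 1) * P.eval (logPlus (max A (t / M))))
      ≤ ∫⁻ t in Ici s, ENNReal.ofReal K * ENNReal.ofReal (1 / t ^ (θ + 1) * √(t / s)) := by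
        refine setLIntegral_mono' measurableSet_Ici fun t (ht : s ≤ t) => ?_
        rw [← ENNReal.ofReal_mul hK]
        refine ENNReal.ofReal_le_ofReal ?_
        have := eval_logPlus_max_div_le hP hn (M := M) hA hs ht
        have : 0 ≤ 1 / t ^ (θ + 1) := by have := hs.trans_le ht; positivity
        nlinarith
    _ = ENNReal.ofReal K * ∫⁻ t in Ici s, ENNReal.ofReal (1 / t ^ (θ + 1) * √(t / s)) :=
        lintegral_const_mul' _ _ ENNReal.ofReal_ne_top
    _ ≤ ENNReal.ofReal K * ENNReal.ofReal (2 / s ^ θ) := by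
        gcongr
        exact lintegral_Ici_inv_pow_mul_sqrt_le hs hθ
    _ = _ := by
        rw [← ENNReal.ofReal_mul hK]
        congr 1
        ring

end TailBound

lemma lintegral_lintegral_le_two_mul_of_diagonal {μ : Measure ℝ} [SFinite μ]
    {F : ℝ → ℝ → ℝ≥0∞} (hF : Measurable (Function.uncurry F)) {g : ℝ → ℝ≥0∞}
    (h₁ : ∀ᵐ x ∂μ, ∫⁻ y in Ici x, F x y ∂μ ≤ g x)
    (h₂ : ∀ᵐ y ∂μ, ∫⁻ x in Ici y, F x y ∂μ ≤ g y) :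
    ∫⁻ y, ∫⁻ x, F x y ∂μ ∂μ ≤ 2 * ∫⁻ x, g x ∂μ := by
  set D : Set (ℝ × ℝ) := {p | p.1 ≤ p.2}
  have hD : MeasurableSet D := measurableSet_le measurable_fst measurable_snd
  have below : ∫⁻ p in D, Function.uncurry F p ∂μ.prod μ ≤ ∫⁻ x, g x ∂μ := by
    rw [← lintegral_indicator hD, lintegral_prod _ (hF.indicator hD).aemeasurable]
    refine lintegral_mono_ae (h₁.mono fun x hx => le_trans (le_of_eq ?_) hx)
    rw [← lintegral_indicator measurableSet_Ici]
    rfl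
  have above : ∫⁻ p in Dᶜ, Function.uncurry F p ∂μ.prod μ ≤ ∫⁻ y, g y ∂μ := by
    rw [← lintegral_indicator hD.compl, lintegral_prod_symm _ (hF.indicator hD.compl).aemeasurable]
    refine lintegral_mono_ae (h₂.mono fun y hy => le_trans ?_ hy)
    rw [← lintegral_indicator measurableSet_Ici]
    refine lintegral_mono fun x => ?_
    by_cases hxy : x ≤ y
    · simp [D, hxy]
    · simp [D, hxy, le_of_not_ge hxy]
  calc ∫⁻ y, ∫⁻ x, F x y ∂μ ∂μ
      = ∫⁻ p in D, Function.uncurry F p ∂μ.prod μ + ∫⁻ p in Dᶜ, Function.uncurry F p ∂μ.prod μ := by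
        rw [lintegral_add_compl _ hD, lintegral_prod_symm' _ hF]
        rfl
    _ ≤ 2 * ∫⁻ x, g x ∂μ := by rw [two_mul]; exact add_le_add below above

lemma integral_integral_le_of_lintegral_enorm_le {α β : Type*} [MeasurableSpace α]
    [MeasurableSpace β] {μ : Measure α} {ν : Measure β} {f : α → β → ℝ} {g : β → ℝ}
    (hg : Integrable g ν) (hg0 : 0 ≤ᵐ[ν] g)
    (h : ∫⁻ y, ∫⁻ x, ‖f x y‖ₑ ∂μ ∂ν ≤ ∫⁻ y, ‖g y‖ₑ ∂ν) :
    ∫ y, ∫ x, f x y ∂μ ∂ν ≤ ∫ y, g y ∂ν := by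
  have hbound : ‖∫ y, ∫ x, f x y ∂μ ∂ν‖ₑ ≤ ∫⁻ y, ‖g y‖ₑ ∂ν :=
    (enorm_integral_le_lintegral_enorm _).trans
      ((lintegral_mono fun y => enorm_integral_le_lintegral_enorm _).trans h)
  calc ∫ y, ∫ x, f x y ∂μ ∂ν ≤ ‖∫ y, ∫ x, f x y ∂μ ∂ν‖ := Real.le_norm_self _
    _ ≤ (∫⁻ y, ‖g y‖ₑ ∂ν).toReal := by
        rw [← toReal_enorm]; exact ENNReal.toReal_mono hg.2.ne hbound
    _ = ∫ y, ‖g y‖ ∂ν := (integral_norm_eq_lintegral_enorm hg.1).symm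
    _ = ∫ y, g y ∂ν := integral_congr_ae (hg0.mono fun y hy => Real.norm_of_nonneg hy)

section Weighted

variable {P : ℝ[X]} {n : ℕ} {w : ℝ → ℝ} {r M : ℝ}

lemma lintegral_Ici_weighted_le (hP : ∀ i, 0 ≤ P.coeff i) (hn : P.natDegree ≤ n)
    (hw0 : ∀ t, 0 ≤ w t) (hw1 : ∀ t, w t ≤ 1) (hr : 0 ≤ r) {x : ℝ} (hx : 0 < x)
    (θ : ℕ) {θ' : ℕ} (hθ' : 1 ≤ θ') :
    ∫⁻ y in Ici x, ENNReal.ofReal (1 / x ^ (θ + 1) * w x * (1 / y ^ (θ' + 1) * w y) *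
        P.eval (logPlus (max (r / x) (y / M))))
      ≤ ENNReal.ofReal (1 / x ^ (θ + θ' + 1) * w x *
          (2 * (P.eval 1 * (1 + 2 * n) ^ n) * (logPlus (max (r / x) (x / M)) + 1) ^ n)) := by
  have ha : 0 ≤ 1 / x ^ (θ + 1) * w x := mul_nonneg (by positivity) (hw0 x)
  calc ∫⁻ y in Ici x, ENNReal.ofReal (1 / x ^ (θ + 1) * w x * (1 / y ^ (θ' + 1) * w y) *
          P.eval (logPlus (max (r / x) (y / M))))
      ≤ ∫⁻ y in Ici x, ENNReal.ofReal (1 / x ^ (θ + 1) * w x) *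
          ENNReal.ofReal (1 / y ^ (θ' + 1) * P.eval (logPlus (max (r / x) (y / M)))) := by
        refine setLIntegral_mono' measurableSet_Ici fun y (hy : x ≤ y) => ?_
        rw [← ENNReal.ofReal_mul ha]
        refine ENNReal.ofReal_le_ofReal ?_
        have hy0 : 0 < y := hx.trans_le hy
        have hb : 0 ≤ 1 / x ^ (θ + 1) * w x * (1 / y ^ (θ' + 1) *
            P.eval (logPlus (max (r / x) (y / M)))) :=
          mul_nonneg ha (mul_nonneg (by positivity)
            (eval_nonneg_of_coeff_nonneg hP (logPlus_nonneg _)))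
        calc _ = 1 / x ^ (θ + 1) * w x * (1 / y ^ (θ' + 1) *
              P.eval (logPlus (max (r / x) (y / M)))) * w y := by ring
          _ ≤ _ := mul_le_of_le_one_right hb (hw1 y)
    _ = ENNReal.ofReal (1 / x ^ (θ + 1) * w x) * ∫⁻ y in Ici x,
          ENNReal.ofReal (1 / y ^ (θ' + 1) * P.eval (logPlus (max (r / x) (y / M)))) :=
        lintegral_const_mul' _ _ ENNReal.ofReal_ne_top
    _ ≤ ENNReal.ofReal (1 / x ^ (θ + 1) * w x) * ENNReal.ofReal (2 * (P.eval 1 * (1 + 2 * n) ^ n) *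
          (logPlus (max (r / x) (x / M)) + 1) ^ n / x ^ θ') := by
        gcongr
        exact lintegral_Ici_inv_pow_mul_eval_logPlus_le hP hn (by positivity) hx hθ'
    _ = _ := by
        rw [← ENNReal.ofReal_mul ha, show θ + θ' + 1 = (θ + 1) + θ' by ring, pow_add]
        congr 1
        field_simp
        ring

lemma lintegral_lintegral_weighted_le (hP : ∀ i, 0 ≤ P.coeff i) (hn : P.natDegree ≤ n)
    (hw : Measurable w) (hw0 : ∀ t, 0 ≤ w t) (hw1 : ∀ t, w t ≤ 1) (hr : 0 ≤ r)
    {θi θj : ℕ} (hθi : 1 ≤ θi) (hθj : 1 ≤ θj) {S : Set ℝ} (hSm : MeasurableSet S)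
    (hS : S ⊆ Ioi 0) :
    ∫⁻ y in S, ∫⁻ x in S, ‖1 / x ^ (θi + 1) * w x * (1 / y ^ (θj + 1) * w y) *
        P.eval (logPlus (max (r / min x y) (max x y / M)))‖ₑ
      ≤ ∫⁻ t in S, ‖1 / t ^ (θi + θj + 1) * w t *
          (4 * (P.eval 1 * (1 + 2 * n) ^ n) * (logPlus (max (r / t) (t / M)) + 1) ^ n)‖ₑ := by
  set H : ℝ → ℝ := fun t => 1 / t ^ (θi + θj + 1) * w t *
    (2 * (P.eval 1 * (1 + 2 * n) ^ n) * (logPlus (max (r / t) (t / M)) + 1) ^ n)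
  have hPm : Measurable fun x => P.eval x := P.continuous.measurable
  have hF0 : ∀ x y, 0 < x → 0 < y →
      0 ≤ 1 / x ^ (θi + 1) * w x * (1 / y ^ (θj + 1) * w y) *
        P.eval (logPlus (max (r / min x y) (max x y / M))) := fun x y hx hy => by
    have := hw0 x; have := hw0 y
    have := eval_nonneg_of_coeff_nonneg hP (logPlus_nonneg (max (r / min x y) (max x y / M)))
    positivity
  have hrestrict : ∀ (f : ℝ → ENNReal) (x : ℝ),
      ∫⁻ y in Ici x, f y ∂volume.restrict S ≤ ∫⁻ y in Ici x, f y :=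
    fun f x => lintegral_mono' (Measure.restrict_mono subset_rfl Measure.restrict_le_self) le_rfl
  calc _ ≤ 2 * ∫⁻ t in S, ENNReal.ofReal (H t) := by
        refine lintegral_lintegral_le_two_mul_of_diagonal (by fun_prop) ?_ ?_
        · refine ae_restrict_of_forall_mem hSm fun x hx => (hrestrict _ x).trans (le_of_eq_of_le ?_
            (lintegral_Ici_weighted_le hP hn hw0 hw1 hr (hS hx) θi hθj))
          refine setLIntegral_congr_fun measurableSet_Ici fun y (hy : x ≤ y) => ?_
          rw [Real.enorm_eq_ofReal (hF0 x y (hS hx) ((hS hx).trans_le hy)), min_eq_left hy,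
            max_eq_right hy]
        · refine ae_restrict_of_forall_mem hSm fun y hy => (hrestrict _ y).trans (le_of_eq_of_le ?_
            ((lintegral_Ici_weighted_le (M := M) hP hn hw0 hw1 hr (hS hy) θj hθi).trans_eq ?_))
          · refine setLIntegral_congr_fun measurableSet_Ici fun x (hx : y ≤ x) => ?_
            rw [Real.enorm_eq_ofReal (hF0 x y ((hS hy).trans_le hx) (hS hy)), min_eq_right hx,
              max_eq_left hx]
            ring_nf
          · rw [add_comm θj θi]
    _ = ∫⁻ t in S, ENNReal.ofReal (2 * H t) := by
        rw [← lintegral_const_mul' _ _ ENNReal.ofNat_ne_top]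
        refine lintegral_congr fun t => ?_
        rw [ENNReal.ofReal_mul zero_le_two, ENNReal.ofReal_ofNat]
    _ ≤ _ := by
        refine lintegral_mono fun t => (Real.ofReal_le_enorm _).trans (le_of_eq ?_)
        simp only [H]
        ring_nf

lemma integral_integral_weighted_le (hP : ∀ i, 0 ≤ P.coeff i) (hn : P.natDegree ≤ n)
    (hw : Measurable w) (hw0 : ∀ t, 0 ≤ w t) (hw1 : ∀ t, w t ≤ 1) (hr : 0 ≤ r)
    {θi θj : ℕ} (hθi : 1 ≤ θi) (hθj : 1 ≤ θj) {S : Set ℝ} (hSm : MeasurableSet S)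
    (hS : S ⊆ Ioi 0)
    (hint : IntegrableOn (fun t => 1 / t ^ (θi + θj + 1) * w t *
      (4 * (P.eval 1 * (1 + 2 * n) ^ n) * (logPlus (max (r / t) (t / M)) + 1) ^ n)) S) :
    ∫ y in S, ∫ x in S, 1 / x ^ (θi + 1) * w x * (1 / y ^ (θj + 1) * w y) *
        P.eval (logPlus (max (r / min x y) (max x y / M)))
      ≤ ∫ t in S, 1 / t ^ (θi + θj + 1) * w t *
          (4 * (P.eval 1 * (1 + 2 * n) ^ n) * (logPlus (max (r / t) (t / M)) + 1) ^ n) := by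
  refine integral_integral_le_of_lintegral_enorm_le hint
    (ae_restrict_of_forall_mem hSm fun t ht => ?_)
    (lintegral_lintegral_weighted_le hP hn hw hw0 hw1 hr hθi hθj hSm hS)
  have : 0 < t := hS ht
  have := hw0 t
  have := eval_nonneg_of_coeff_nonneg hP zero_le_one
  have := logPlus_nonneg (max (r / t) (t / M))
  positivity

end Weighted

lemma exp_neg_div_mul_sq_le_one {α K : ℝ} (hα : 0 ≤ α) (hK : 0 ≤ K) (t : ℝ) :
    exp (-K / (α * t ^ 2)) ≤ 1 :=
  exp_le_one_iff.mpr (div_nonpos_of_nonpos_of_nonneg (neg_nonpos.mpr hK) (by positivity))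

lemma inv_pow_mul_exp_neg_div_sq_le {α K t : ℝ} (hα : 0 < α) (hK : 0 < K) (ht : 0 < t) (p : ℕ) :
    1 / t ^ p * exp (-K / (α * t ^ 2)) ≤ p.factorial * (α / K) ^ p * t ^ p := by
  have hx : 0 < K / (α * t ^ 2) := by positivity
  have hexp : exp (-K / (α * t ^ 2)) ≤ p.factorial / (K / (α * t ^ 2)) ^ p := by
    rw [neg_div, exp_neg, ← one_div, div_le_div_iff₀ (exp_pos _) (by positivity), one_mul,
      ← div_le_iff₀' (by positivity)]
    exact pow_div_factorial_le_exp _ hx.le p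
  calc 1 / t ^ p * exp (-K / (α * t ^ 2))
      ≤ 1 / t ^ p * (p.factorial / (K / (α * t ^ 2)) ^ p) := by gcongr
    _ = p.factorial * (α / K) ^ p * t ^ p := by
        rw [div_pow, div_pow, mul_pow, ← pow_mul]
        field_simp
        ring

lemma integrableOn_inv_pow_mul_exp_mul_logPlus_pow (m n : ℕ) {α K M r Λ Λ₀ : ℝ} (hα : 0 < α)
    (hK : 0 ≤ K) (hM : 0 < M) (hr : 0 ≤ r) (hΛ : 0 ≤ Λ) (hpos : 0 < Λ ∨ 0 < K) :
    IntegrableOn (fun t => 1 / t ^ m * exp (-K / (α * t ^ 2)) *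
      (logPlus (max (r / t) (t / M)) + 1) ^ n) (Ioo Λ Λ₀) := by
  set R := Λ₀ + r + Λ₀ ^ 2 / M
  obtain ⟨B, hB⟩ : ∃ B, ∀ t ∈ Ioo Λ Λ₀, 1 / t ^ (m + n) * exp (-K / (α * t ^ 2)) ≤ B := by
    rcases hpos with hΛpos | hKpos
    · refine ⟨1 / Λ ^ (m + n), fun t ht => ?_⟩
      calc 1 / t ^ (m + n) * exp (-K / (α * t ^ 2)) ≤ 1 / Λ ^ (m + n) * 1 := by
            gcongr
            exacts [ht.1.le, exp_neg_div_mul_sq_le_one hα.le hK t]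
        _ = _ := mul_one _
    · exact ⟨(m + n).factorial * (α / K) ^ (m + n) * Λ₀ ^ (m + n), fun t ht =>
        (inv_pow_mul_exp_neg_div_sq_le hα hKpos (hΛ.trans_lt ht.1) _).trans
          (by gcongr; exacts [(hΛ.trans_lt ht.1).le, ht.2.le])⟩
  refine Measure.integrableOn_of_bounded (M := R ^ n * B)
    (by rw [Real.volume_Ioo]; exact ENNReal.ofReal_ne_top)
    (Measurable.aestronglyMeasurable (by fun_prop))
    (ae_restrict_of_forall_mem measurableSet_Ioo fun t ht => ?_)
  have ht0 : 0 < t := hΛ.trans_lt ht.1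
  have hlog : logPlus (max (r / t) (t / M)) + 1 ≤ R / t := by
    refine (logPlus_add_one_le _).trans (max_le ?_ (max_le ?_ ?_)) <;> rw [le_div_iff₀ ht0]
    · have : 0 ≤ Λ₀ ^ 2 / M := by positivity
      linarith [ht.2]
    · have : 0 ≤ Λ₀ ^ 2 / M := by positivity
      rw [div_mul_cancel₀ _ ht0.ne']
      linarith [ht.1, ht.2]
    · have : t / M * t ≤ Λ₀ ^ 2 / M := by
        rw [div_mul_eq_mul_div, ← sq]
        gcongr
        exact ht.2.le
      linarith [ht.1, ht.2]
  have hL := logPlus_nonneg (max (r / t) (t / M))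
  have he := exp_pos (-K / (α * t ^ 2))
  rw [Real.norm_of_nonneg (by positivity)]
  calc 1 / t ^ m * exp (-K / (α * t ^ 2)) * (logPlus (max (r / t) (t / M)) + 1) ^ n
      ≤ 1 / t ^ m * exp (-K / (α * t ^ 2)) * (R / t) ^ n := by gcongr
    _ = R ^ n * (1 / t ^ (m + n) * exp (-K / (α * t ^ 2))) := by
        rw [div_pow, pow_add]
        field_simp
    _ ≤ R ^ n * B := by
        have : 0 ≤ R := by linarith [ht.1, ht.2, (by positivity : 0 ≤ Λ₀ ^ 2 / M)]
        gcongr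
        exact hB t ht

lemma not_integrableOn_Ioo_of_div_le {f : ℝ → ℝ} {ε c : ℝ} (hε : 0 < ε) (hc : 0 < c)
    (h : ∀ x ∈ Ioo 0 ε, c / x ≤ f x) : ¬ IntegrableOn f (Ioo 0 ε) := by
  intro hf
  have hinv : IntegrableOn (fun x => x⁻¹) (Ioo 0 ε) := by
    refine (hf.const_mul c⁻¹).mono' measurable_inv.aestronglyMeasurable
      (ae_restrict_of_forall_mem measurableSet_Ioo fun x hx => ?_)
    rw [Real.norm_of_nonneg (inv_nonneg.mpr hx.1.le), inv_mul_eq_div, le_div_iff₀ hc, mul_comm,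
      ← div_eq_mul_inv]
    exact h x hx
  rw [← intervalIntegrable_iff_integrableOn_Ioo_of_le hε.le, intervalIntegrable_inv_iff] at hinv
  simp [hε.ne, hε.le] at hinv

lemma Polynomial.not_integrableOn_inv_pow_mul_eval_logPlus {P : ℝ[X]} (hP : ∀ i, 0 ≤ P.coeff i)
    (hP0 : P ≠ 0) {r M y Λ₀ : ℝ} (hr : 0 < r) (hy : y ∈ Ioo 0 Λ₀) (θi θj : ℕ) :
    ¬ IntegrableOn (fun x => 1 / x ^ (θi + 1) * (1 / y ^ (θj + 1)) *
      P.eval (logPlus (max (r / min x y) (max x y / M)))) (Ioo 0 Λ₀) := by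
  set ε := min (min y 1) (r / exp 1)
  have hε : 0 < ε := lt_min (lt_min hy.1 one_pos) (by positivity)
  refine fun hf => not_integrableOn_Ioo_of_div_le hε (c := P.leadingCoeff * (1 / y ^ (θj + 1)))
    (mul_pos (leadingCoeff_pos_of_coeff_nonneg hP hP0) (by have := hy.1; positivity))
    (fun x hx => ?_) (hf.mono_set (Ioo_subset_Ioo_right ?_))
  · obtain ⟨hx0, hxε⟩ := hx
    have hxy : x ≤ y := hxε.le.trans ((min_le_left _ _).trans (min_le_left _ _))
    have hx1 : x ≤ 1 := hxε.le.trans ((min_le_left _ _).trans (min_le_right _ _))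
    have hxr : exp 1 ≤ r / x := by
      rw [le_div_iff₀ hx0, mul_comm, ← le_div_iff₀ (exp_pos 1)]
      exact hxε.le.trans (min_le_right _ _)
    have hpow : 1 / x ≤ 1 / x ^ (θi + 1) :=
      one_div_le_one_div_of_le (by positivity) (pow_le_of_le_one hx0.le hx1 (by omega))
    have hlead : P.leadingCoeff ≤ P.eval (logPlus (max (r / min x y) (max x y / M))) := by
      rw [min_eq_left hxy]
      exact leadingCoeff_le_eval hP (one_le_logPlus (hxr.trans (le_max_left _ _)))
    have := leadingCoeff_pos_of_coeff_nonneg hP hP0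
    have := hy.1
    calc P.leadingCoeff * (1 / y ^ (θj + 1)) / x
        = 1 / x * (1 / y ^ (θj + 1)) * P.leadingCoeff := by ring
      _ ≤ _ := by gcongr
  · exact (min_le_left _ _).trans ((min_le_left _ _).trans hy.2.le)

lemma Polynomial.integral_integral_inv_pow_mul_eval_logPlus_eq_zero {P : ℝ[X]}
    (hP : ∀ i, 0 ≤ P.coeff i) {r M Λ₀ : ℝ} (hr : 0 < r) (θi θj : ℕ) :
    ∫ y in Ioo 0 Λ₀, ∫ x in Ioo 0 Λ₀, 1 / x ^ (θi + 1) * (1 / y ^ (θj + 1)) *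
      P.eval (logPlus (max (r / min x y) (max x y / M))) = 0 := by
  rcases eq_or_ne P 0 with rfl | hP0
  · simp
  exact setIntegral_eq_zero_of_forall_eq_zero fun y hy =>
    integral_undef (not_integrableOn_inv_pow_mul_eval_logPlus hP hP0 hr hy θi θj)

theorem integral_integral_exp_weighted_le {P : ℝ[X]} {n : ℕ} (hP : ∀ i, 0 ≤ P.coeff i)
    (hn : P.natDegree ≤ n) {α K M r Λ Λ₀ : ℝ} (hα : 0 < α) (hK : 0 ≤ K) (hM : 0 < M)
    (hr : 0 < r) (hΛ : 0 ≤ Λ) {θi θj : ℕ} (hθi : 1 ≤ θi) (hθj : 1 ≤ θj) :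
    ∫ y in Ioo Λ Λ₀, ∫ x in Ioo Λ Λ₀,
        1 / x ^ (θi + 1) * exp (-K / (α * x ^ 2)) * (1 / y ^ (θj + 1) * exp (-K / (α * y ^ 2))) *
          P.eval (logPlus (max (r / min x y) (max x y / M)))
      ≤ ∫ t in Ioo Λ Λ₀, 1 / t ^ (θi + θj + 1) * exp (-K / (α * t ^ 2)) *
          (4 * (P.eval 1 * (1 + 2 * n) ^ n) * (logPlus (max (r / t) (t / M)) + 1) ^ n) := by
  by_cases hint : IntegrableOn (fun t => 1 / t ^ (θi + θj + 1) * exp (-K / (α * t ^ 2)) *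
      (4 * (P.eval 1 * (1 + 2 * n) ^ n) * (logPlus (max (r / t) (t / M)) + 1) ^ n)) (Ioo Λ Λ₀)
  · exact integral_integral_weighted_le hP hn (by fun_prop) (fun t => (exp_pos _).le)
      (exp_neg_div_mul_sq_le_one hα.le hK) hr.le hθi hθj measurableSet_Ioo
      (fun t ht => hΛ.trans_lt ht.1) hint
  obtain ⟨rfl, rfl⟩ : Λ = 0 ∧ K = 0 := by
    by_contra! hdeg
    refine hint (IntegrableOn.congr_fun ((integrableOn_inv_pow_mul_exp_mul_logPlus_pow
      (θi + θj + 1) n hα hK hM hr.le hΛ ?_).const_mul (4 * (P.eval 1 * (1 + 2 * n) ^ n)))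
      (fun t _ => by ring) measurableSet_Ioo)
    rcases hΛ.lt_or_eq with hΛpos | rfl
    · exact Or.inl hΛpos
    · exact Or.inr (hK.lt_of_ne (hdeg rfl).symm)
  rw [integral_undef hint]
  simp only [neg_zero, zero_div, exp_zero, mul_one]
  exact (integral_integral_inv_pow_mul_eval_logPlus_eq_zero hP hr θi θj).le

lemma Polynomial.natDegree_C_mul_X_add_one_pow_le (c : ℝ) (n : ℕ) :
    (C c * (X + 1) ^ n).natDegree ≤ n := by
  refine (natDegree_C_mul_le _ _).trans (natDegree_pow_le.trans ?_)
  rw [← C_1, natDegree_X_add_C, mul_one]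

lemma Polynomial.coeff_C_mul_X_add_one_pow_nonneg {c : ℝ} (hc : 0 ≤ c) (n i : ℕ) :
    0 ≤ (C c * (X + 1) ^ n).coeff i := by
  rw [coeff_C_mul, coeff_X_add_one_pow]
  positivity

theorem stmt10 (n : ℕ) (P : Polynomial ℝ) (hPdeg : P.natDegree ≤ n)
    (hPcoeff : ∀ i, 0 ≤ P.coeff i) :
    ∃ P' : Polynomial ℝ, P'.natDegree ≤ n ∧ (∀ i, 0 ≤ P'.coeff i) ∧
      ∀ (α : ℝ), 0 < α → ∀ (θi θj : ℕ), 1 ≤ θi → 1 ≤ θj →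
        ∀ (k : EuclideanSpace ℝ (Fin 4)) (M r Λ Λ₀ : ℝ),
          0 < M → M ≤ r → 0 ≤ Λ → Λ ≤ Λ₀ →
          (∫ tj in Set.Ioo Λ Λ₀, ∫ ti in Set.Ioo Λ Λ₀,
              (1 / ti ^ (θi + 1)) * Real.exp (-‖k‖ ^ 2 / (α * ti ^ 2)) *
                ((1 / tj ^ (θj + 1)) * Real.exp (-‖k‖ ^ 2 / (α * tj ^ 2))) *
                P.eval (logPlus (max (r / min ti tj) (max ti tj / M))))
            ≤ ∫ t in Set.Ioo Λ Λ₀,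
                (1 / t ^ (θi + θj + 1)) * Real.exp (-‖k‖ ^ 2 / (α * t ^ 2)) *
                  P'.eval (logPlus (max (r / t) (t / M))) := by
  have hc : 0 ≤ 4 * (P.eval 1 * (1 + 2 * n) ^ n) := by
    have := eval_nonneg_of_coeff_nonneg hPcoeff zero_le_one
    positivity
  refine ⟨C (4 * (P.eval 1 * (1 + 2 * n) ^ n)) * (X + 1) ^ n,
    natDegree_C_mul_X_add_one_pow_le _ n, coeff_C_mul_X_add_one_pow_nonneg hc n, ?_⟩
  intro α hα θi θj hθi hθj k M r Λ Λ₀ hM hMr hΛ _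
  simp only [eval_mul, eval_C, eval_pow, eval_add, eval_X, eval_one]
  exact integral_integral_exp_weighted_le hPcoeff hPdeg hα (by positivity) hM (hM.trans_le hMr)
    hΛ hθi hθj
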